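/- arXiv:2507.23056 — 11 statements merged into one kernel-verified Lean document; each statement's English description precedes it below -/
import Mathlib

section
/- Let Σ be a finite nonempty type and let G be a group acting on Σ. Let TM be the set of all G-equivariant Markov matrices on Σ all of whose entries are strictly positive (the general open equivariant phylogenetic model). Then TM is splittable: for every k and every family M¹, …, Mᵏ ∈ TM there exists an invertible matrix N ∈ TM such that Mⁱ·N⁻¹ ∈ TM for all i = 1, …, k. -/
/-- A Markov matrix: nonnegative entries, rows sum to 1. -/
def IsMarkov {S : Type*} [Fintype S] (M : Matrix S S ℝ) : Prop :=
  (∀ i j, 0 ≤ M i j) ∧ ∀ i, ∑ j, M i j = 1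

/-- A `G`-equivariant matrix: `M (g • i) (g • j) = M i j`. -/
def IsEquivariant (G : Type*) {S : Type*} [Group G] [MulAction G S]
    (M : Matrix S S ℝ) : Prop :=
  ∀ (g : G) (i j : S), M (g • i) (g • j) = M i j


/-!
Take `N = (1 - ε) • 1 + ε • U`, where `U` is the Markov matrix with all entries `1 / |S|`.
It is positive, equivariant and Markov, and since `U` is idempotent its inverse is
`(1 - ε)⁻¹ • (1 - ε • U)`. Every Markov `K` satisfies `K * U = U`, hence
`K * N⁻¹ = (1 - ε)⁻¹ • (K - ε • U)`, which is equivariant, has row sums `1`, and is positive as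
soon as `ε` lies below every entry of `K`. A single `ε` works for the finitely many `Mⁱ`.
-/

open Matrix Filter Topology

theorem exists_pos_lt_one_forall_lt {ι : Type*} [Finite ι] {f : ι → ℝ} (hf : ∀ i, 0 < f i) :
    ∃ ε : ℝ, 0 < ε ∧ ε < 1 ∧ ∀ i, ε < f i := by
  have hsmall : ∀ᶠ ε in 𝓝[>] (0 : ℝ), 0 < ε ∧ ε < 1 ∧ ∀ i, ε < f i :=
    eventually_mem_nhdsWithin.and <| nhdsWithin_le_nhds <| (eventually_lt_nhds one_pos).and
      (eventually_all.2 fun i => eventually_lt_nhds (hf i))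
  exact hsmall.exists

theorem IsIdempotentElem.smul_one_add_smul_mul_smul_one_sub_smul {𝕜 A : Type*} [Field 𝕜]
    [Ring A] [Algebra 𝕜 A] {p : A} (hp : IsIdempotentElem p) {ε : 𝕜} (hε : ε ≠ 1) :
    ((1 - ε) • 1 + ε • p) * ((1 - ε)⁻¹ • (1 - ε • p)) = 1 := by
  have h : 1 - ε ≠ 0 := sub_ne_zero.2 hε.symm
  simp only [add_mul, mul_sub, smul_mul_smul, one_mul, mul_one, hp.eq, smul_sub, smul_smul]
  match_scalars
  · field_simp
  · field_simp
    ring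

section Equivariant

variable {S G : Type*} [Group G] [MulAction G S] {A B : Matrix S S ℝ}

theorem IsEquivariant.add (hA : IsEquivariant G A) (hB : IsEquivariant G B) :
    IsEquivariant G (A + B) := fun g i j => by simp [hA g i j, hB g i j]

theorem IsEquivariant.sub (hA : IsEquivariant G A) (hB : IsEquivariant G B) :
    IsEquivariant G (A - B) := fun g i j => by simp [hA g i j, hB g i j]

theorem IsEquivariant.smul (c : ℝ) (hA : IsEquivariant G A) : IsEquivariant G (c • A) :=
  fun g i j => by simp [hA g i j]

theorem isEquivariant_one [DecidableEq S] : IsEquivariant G (1 : Matrix S S ℝ) :=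
  fun g i j => by simp [one_apply]

end Equivariant

section Stochastic

variable {S : Type*} [Fintype S] [DecidableEq S]

theorem isMarkov_iff_mem_rowStochastic {M : Matrix S S ℝ} :
    IsMarkov M ↔ M ∈ rowStochastic ℝ S :=
  mem_rowStochastic_iff_sum.symm

theorem mul_inv_mulVec_one {K N : Matrix S S ℝ} (hK : K *ᵥ 1 = 1) (hN : N *ᵥ 1 = 1)
    (hNu : IsUnit N) : (K * N⁻¹) *ᵥ 1 = 1 := by
  have hinv : N⁻¹ *ᵥ 1 = 1 := by
    conv_lhs => rw [← hN, mulVec_mulVec, nonsing_inv_mul N ((isUnit_iff_isUnit_det N).1 hNu)]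
    exact one_mulVec 1
  rw [← mulVec_mulVec, hinv, hK]

end Stochastic

section Uniform

variable (S : Type*) [Fintype S]

noncomputable def uniformMatrix : Matrix S S ℝ :=
  of fun _ _ => (Fintype.card S : ℝ)⁻¹

variable {S}

@[simp]
theorem uniformMatrix_apply (i j : S) : uniformMatrix S i j = (Fintype.card S : ℝ)⁻¹ :=
  rfl

theorem mul_uniformMatrix {K : Matrix S S ℝ} (hK : ∀ i, ∑ j, K i j = 1) :
    K * uniformMatrix S = uniformMatrix S := by
  ext i j
  simp [mul_apply, ← Finset.sum_mul, hK i]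

theorem isEquivariant_uniformMatrix (G : Type*) [Group G] [MulAction G S] :
    IsEquivariant G (uniformMatrix S) :=
  fun _ _ _ => rfl

variable [Nonempty S]

theorem sum_uniformMatrix (i : S) : ∑ j, uniformMatrix S i j = 1 := by
  simp [Fintype.card_ne_zero]

theorem isIdempotentElem_uniformMatrix : IsIdempotentElem (uniformMatrix S) :=
  mul_uniformMatrix sum_uniformMatrix

theorem isMarkov_uniformMatrix : IsMarkov (uniformMatrix S) :=
  ⟨fun _ _ => by simp only [uniformMatrix_apply]; positivity, sum_uniformMatrix⟩

end Uniform

section UniformMix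

variable (S : Type*) [Fintype S] [DecidableEq S]

noncomputable def uniformMix (ε : ℝ) : Matrix S S ℝ :=
  (1 - ε) • 1 + ε • uniformMatrix S

variable {S}

theorem isEquivariant_uniformMix (G : Type*) [Group G] [MulAction G S] (ε : ℝ) :
    IsEquivariant G (uniformMix S ε) :=
  (isEquivariant_one.smul _).add ((isEquivariant_uniformMatrix G).smul _)

variable [Nonempty S] {ε : ℝ}

theorem uniformMix_mul_eq_one (hε : ε ≠ 1) :
    uniformMix S ε * ((1 - ε)⁻¹ • (1 - ε • uniformMatrix S)) = 1 :=
  isIdempotentElem_uniformMatrix.smul_one_add_smul_mul_smul_one_sub_smul hε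

theorem isUnit_uniformMix (hε : ε ≠ 1) : IsUnit (uniformMix S ε) :=
  (isUnit_iff_isUnit_det _).2 (isUnit_det_of_right_inverse (uniformMix_mul_eq_one hε))

theorem mul_inv_uniformMix {K : Matrix S S ℝ} (hK : ∀ i, ∑ j, K i j = 1) (hε : ε ≠ 1) :
    K * (uniformMix S ε)⁻¹ = (1 - ε)⁻¹ • (K - ε • uniformMatrix S) := by
  rw [inv_eq_right_inv (uniformMix_mul_eq_one hε), mul_smul_comm, mul_sub, mul_one,
    mul_smul_comm, mul_uniformMatrix hK]

theorem uniformMix_pos (h0 : 0 < ε) (h1 : ε ≤ 1) (i j : S) : 0 < uniformMix S ε i j := by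
  have hdiag : 0 ≤ (1 - ε) * (1 : Matrix S S ℝ) i j :=
    mul_nonneg (sub_nonneg.2 h1) (zero_le_one_elem i j)
  simp only [uniformMix, Matrix.add_apply, Matrix.smul_apply, uniformMatrix_apply,
    smul_eq_mul] at hdiag ⊢
  positivity

theorem isMarkov_uniformMix (h0 : 0 ≤ ε) (h1 : ε ≤ 1) : IsMarkov (uniformMix S ε) :=
  isMarkov_iff_mem_rowStochastic.2 <| convex_rowStochastic (one_mem _)
    (isMarkov_iff_mem_rowStochastic.1 isMarkov_uniformMatrix) (sub_nonneg.2 h1) h0 (by ring)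

theorem mul_inv_uniformMix_pos {K : Matrix S S ℝ} (hK : ∀ i, ∑ j, K i j = 1) (h0 : 0 ≤ ε)
    (h1 : ε < 1) {i j : S} (hKε : ε < K i j) : 0 < (K * (uniformMix S ε)⁻¹) i j := by
  have hcard : (Fintype.card S : ℝ)⁻¹ ≤ 1 :=
    inv_le_one_of_one_le₀ (Nat.one_le_cast.2 Fintype.card_pos)
  rw [mul_inv_uniformMix hK h1.ne]
  simp only [Matrix.smul_apply, Matrix.sub_apply, uniformMatrix_apply, smul_eq_mul]
  exact mul_pos (inv_pos.2 (sub_pos.2 h1)) (by nlinarith)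

end UniformMix

/-- The set of all `G`-equivariant Markov matrices with strictly
positive entries (the general open equivariant phylogenetic model) is
splittable: for every finite family `M¹, …, Mᵏ` in this set there is an
invertible matrix `N` in this set such that each `Mⁱ * N⁻¹` is again in the
set. -/
theorem openEquivariant_splittable
    {S : Type*} [Fintype S] [Nonempty S] [DecidableEq S]
    {G : Type*} [Group G] [MulAction G S]
    (k : ℕ) (M : Fin k → Matrix S S ℝ)
    (hM : ∀ i, IsMarkov (M i) ∧ IsEquivariant G (M i) ∧ ∀ s t, 0 < M i s t) :
    ∃ N : Matrix S S ℝ,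
      (IsMarkov N ∧ IsEquivariant G N ∧ ∀ s t, 0 < N s t) ∧ IsUnit N ∧
      ∀ i, IsMarkov (M i * N⁻¹) ∧ IsEquivariant G (M i * N⁻¹) ∧
        ∀ s t, 0 < (M i * N⁻¹) s t := by
  obtain ⟨ε, hε0, hε1, hεM⟩ := exists_pos_lt_one_forall_lt fun p : Fin k × S × S =>
    (hM p.1).2.2 p.2.1 p.2.2
  have hNmarkov := isMarkov_uniformMix (S := S) hε0.le hε1.le
  have hNunit := isUnit_uniformMix (S := S) hε1.ne
  refine ⟨uniformMix S ε, ⟨hNmarkov, isEquivariant_uniformMix G ε, uniformMix_pos hε0 hε1.le⟩,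
    hNunit, fun i => ?_⟩
  obtain ⟨hMmarkov, hMequiv, -⟩ := hM i
  have hpos : ∀ s t, 0 < (M i * (uniformMix S ε)⁻¹) s t := fun s t =>
    mul_inv_uniformMix_pos hMmarkov.2 hε0.le hε1 (hεM (i, s, t))
  refine ⟨isMarkov_iff_mem_rowStochastic.2 ⟨fun s t => (hpos s t).le, ?_⟩, ?_, hpos⟩
  · exact mul_inv_mulVec_one (isMarkov_iff_mem_rowStochastic.1 hMmarkov).2
      (isMarkov_iff_mem_rowStochastic.1 hNmarkov).2 hNunit
  · rw [mul_inv_uniformMix hMmarkov.2 hε1.ne]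
    exact (hMequiv.sub ((isEquivariant_uniformMatrix G).smul ε)).smul _
end

section
/- Let Σ be a finite nonempty type, let A be a finite nonempty type with a distinguished element a₀ ∈ A, and let TM be a set of Markov matrices on Σ that is multiplicatively closed and splittable. Consider the two sets of functions p : (A → Σ) × Σ → ℝ: S₁ consists of all functions of the form p(x, c) = π(a₀)·(M·M')(x(a₀), c) + Σ_{a ≠ a₀} π(a)·K_a(x(a), c) where π : A → ℝ is nonnegative with Σ_a π(a) = 1 and M, M' ∈ TM and K_a ∈ TM for all a ≠ a₀; S₂ consists of all functions of the form p(x, c) = Σ_{a ∈ A} π(a)·K_a(x(a), c) where π : A → ℝ is nonnegative with Σ_a π(a) = 1 and K_a ∈ TM for all a. Then S₁ = S₂. -/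
/-- subdividing a reticulation edge `a₀ → c` by a hidden
degree-2 vertex does not change the family of conditional distributions at the
reticulation vertex, provided the transition model `TM` is multiplicatively
closed and splittable. -/
theorem subdivide_reticulation_edge
    {S A : Type*} [Fintype S] [Nonempty S] [DecidableEq S]
    [Fintype A] [Nonempty A] [DecidableEq A]
    (a₀ : A) (TM : Set (Matrix S S ℝ))
    (hMarkov : ∀ M ∈ TM, IsMarkov M)
    (hmul : ∀ M ∈ TM, ∀ N ∈ TM, M * N ∈ TM)
    (hsplit : ∀ (k : ℕ) (Ms : Fin k → Matrix S S ℝ), (∀ i, Ms i ∈ TM) →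
      ∃ N ∈ TM, IsUnit N ∧ ∀ i, Ms i * N⁻¹ ∈ TM) :
    {p : (A → S) × S → ℝ |
        ∃ (π : A → ℝ) (M M' : Matrix S S ℝ) (K : A → Matrix S S ℝ),
          (∀ a, 0 ≤ π a) ∧ (∑ a, π a = 1) ∧ M ∈ TM ∧ M' ∈ TM ∧
          (∀ a, a ≠ a₀ → K a ∈ TM) ∧
          p = fun xc => π a₀ * (M * M') (xc.1 a₀) xc.2 +
            ∑ a ∈ Finset.univ.erase a₀, π a * K a (xc.1 a) xc.2} =
      {p : (A → S) × S → ℝ |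
        ∃ (π : A → ℝ) (K : A → Matrix S S ℝ),
          (∀ a, 0 ≤ π a) ∧ (∑ a, π a = 1) ∧ (∀ a, K a ∈ TM) ∧
          p = fun xc => ∑ a, π a * K a (xc.1 a) xc.2} := by
  ext p
  simp only [Set.mem_setOf_eq]
  constructor
  · rintro ⟨π, M, M', K, hπ, hsum, hM, hM', hK, rfl⟩
    refine ⟨π, fun a => if a = a₀ then M * M' else K a, hπ, hsum, ?_, ?_⟩
    · intro a
      by_cases h : a = a₀
      · simp [h, hmul M hM M' hM']
      · simp [h, hK a h]
    · funext xc
      rw [← Finset.add_sum_erase Finset.univ _ (Finset.mem_univ a₀)]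
      simp only [if_pos rfl]
      congr 1
      exact Finset.sum_congr rfl fun a ha => by
        rw [if_neg (Finset.ne_of_mem_erase ha)]
  · rintro ⟨π, K, hπ, hsum, hK, rfl⟩
    obtain ⟨N, hN, hNu, hinv⟩ := hsplit 1 (fun _ => K a₀) (fun _ => hK a₀)
    refine ⟨π, K a₀ * N⁻¹, N, K, hπ, hsum, hinv 0, hN, fun a _ => hK a, ?_⟩
    funext xc
    have : K a₀ * N⁻¹ * N = K a₀ := by
      rw [Matrix.mul_assoc, Matrix.nonsing_inv_mul N
        ((Matrix.isUnit_iff_isUnit_det N).mp hNu), Matrix.mul_one]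
    rw [this, ← Finset.add_sum_erase Finset.univ _ (Finset.mem_univ a₀)]
end

section
/- Let Σ be a finite nonempty type, let A be a finite nonempty type, and let TM be a set of Markov matrices on Σ that is multiplicatively closed and splittable. Consider the two sets of functions p : (A → Σ) × Σ → ℝ: S₁ consists of all functions of the form p(x, c) = Σ_{a ∈ A} π(a)·(M_a·N)(x(a), c) where π : A → ℝ is nonnegative with Σ_a π(a) = 1, M_a ∈ TM for all a, and N ∈ TM; S₂ consists of all functions of the form p(x, c) = Σ_{a ∈ A} π(a)·K_a(x(a), c) where π : A → ℝ is nonnegative with Σ_a π(a) = 1 and K_a ∈ TM for all a. Then S₁ = S₂. -/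
/-- contracting the outgoing edge of a reticulation vertex with
outdegree 1 (whose unique child has indegree 1) does not change the family of
conditional distributions, provided the transition model `TM` is
multiplicatively closed and splittable. -/
theorem contract_reticulation_edge
    {S A : Type*} [Fintype S] [Nonempty S] [DecidableEq S]
    [Fintype A] [Nonempty A] [DecidableEq A]
    (TM : Set (Matrix S S ℝ))
    (hMarkov : ∀ M ∈ TM, IsMarkov M)
    (hmul : ∀ M ∈ TM, ∀ N ∈ TM, M * N ∈ TM)
    (hsplit : ∀ (k : ℕ) (Ms : Fin k → Matrix S S ℝ), (∀ i, Ms i ∈ TM) →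
      ∃ N ∈ TM, IsUnit N ∧ ∀ i, Ms i * N⁻¹ ∈ TM) :
    {p : (A → S) × S → ℝ |
        ∃ (π : A → ℝ) (M : A → Matrix S S ℝ) (N : Matrix S S ℝ),
          (∀ a, 0 ≤ π a) ∧ (∑ a, π a = 1) ∧ (∀ a, M a ∈ TM) ∧ N ∈ TM ∧
          p = fun xc => ∑ a, π a * (M a * N) (xc.1 a) xc.2} =
      {p : (A → S) × S → ℝ |
        ∃ (π : A → ℝ) (K : A → Matrix S S ℝ),
          (∀ a, 0 ≤ π a) ∧ (∑ a, π a = 1) ∧ (∀ a, K a ∈ TM) ∧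
          p = fun xc => ∑ a, π a * K a (xc.1 a) xc.2} := by
  ext p
  simp only [Set.mem_setOf_eq]
  constructor
  · rintro ⟨π, M, N, hπ, hπs, hM, hN, rfl⟩
    exact ⟨π, fun a => M a * N, hπ, hπs, fun a => hmul _ (hM a) _ hN, rfl⟩
  · rintro ⟨π, K, hπ, hπs, hK, rfl⟩
    obtain ⟨e⟩ := Fintype.truncEquivFin A
    obtain ⟨N, hN, hNu, hsp⟩ := hsplit (Fintype.card A) (fun i => K (e.symm i))
      (fun i => hK _)
    refine ⟨π, fun a => K a * N⁻¹, N, hπ, hπs, fun a => by simpa using hsp (e a), hN, ?_⟩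
    have hdet : IsUnit N.det := (Matrix.isUnit_iff_isUnit_det N).mp hNu
    funext xc
    simp [Matrix.nonsing_inv_mul_cancel_right _ _ hdet]
end

section
/- Let Σ be a finite nonempty type, let A₁, A₂, A₃ be pairwise disjoint finite sets with A₁ ∪ A₃ nonempty, let A = A₁ ∪ A₂ ∪ A₃, and let TM be a set of Markov matrices on Σ that is multiplicatively closed, closed under convex combinations, and splittable. Consider the two sets of functions p : (A → Σ) × Σ → ℝ: F₁ consists of all functions of the form p(x, c) = Σ_{a ∈ A₁∪A₃} δ(a)·γ·(M_a·M')(x(a), c) + Σ_{a ∈ A₂∪A₃} λ(a)·K_a(x(a), c), where δ : A₁∪A₃ → ℝ is nonnegative with Σ_a δ(a) = 1, γ ≥ 0 and λ : A₂∪A₃ → ℝ is nonnegative with γ + Σ_a λ(a) = 1, and M_a ∈ TM for a ∈ A₁∪A₃, M' ∈ TM, K_a ∈ TM for a ∈ A₂∪A₃; F₂ consists of all functions of the form p(x, c) = Σ_{a ∈ A} ε(a)·N_a(x(a), c) where ε : A → ℝ is nonnegative with Σ_a ε(a) = 1 and N_a ∈ TM for all a. Then F₁ = F₂. Moreover, the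 same equality holds when all the weights δ(a), γ, λ(a) in F₁ and ε(a) in F₂ are additionally required to be strictly positive. -/
/-- The family of conditional distributions at a stacked reticulation `b → c`:
`A₁` = parents of `b` only, `A₂` = parents of `c` only, `A₃` = common parents,
with weights satisfying the condition `cond` (nonnegativity or positivity). -/
def stackedFamily {S A : Type*} [Fintype S] [Fintype A] [DecidableEq A]
    (TM : Set (Matrix S S ℝ)) (A₁ A₂ A₃ : Finset A) (cond : ℝ → Prop) :
    Set ((A → S) × S → ℝ) :=
  {p | ∃ (δ : A → ℝ) (γ : ℝ) (lam : A → ℝ) (M : A → Matrix S S ℝ)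
        (M' : Matrix S S ℝ) (K : A → Matrix S S ℝ),
      (∀ a ∈ A₁ ∪ A₃, cond (δ a)) ∧ (∑ a ∈ A₁ ∪ A₃, δ a = 1) ∧
      cond γ ∧ (∀ a ∈ A₂ ∪ A₃, cond (lam a)) ∧
      (γ + ∑ a ∈ A₂ ∪ A₃, lam a = 1) ∧
      (∀ a ∈ A₁ ∪ A₃, M a ∈ TM) ∧ M' ∈ TM ∧ (∀ a ∈ A₂ ∪ A₃, K a ∈ TM) ∧
      p = fun xc => (∑ a ∈ A₁ ∪ A₃, δ a * γ * (M a * M') (xc.1 a) xc.2)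
          + ∑ a ∈ A₂ ∪ A₃, lam a * K a (xc.1 a) xc.2}

/-- The family of conditional distributions after contracting the stacked
reticulation edge `b → c`. -/
def contractedFamily {S A : Type*} [Fintype S] [Fintype A]
    (TM : Set (Matrix S S ℝ)) (cond : ℝ → Prop) : Set ((A → S) × S → ℝ) :=
  {p | ∃ (ε : A → ℝ) (N : A → Matrix S S ℝ),
      (∀ a, cond (ε a)) ∧ (∑ a, ε a = 1) ∧ (∀ a, N a ∈ TM) ∧
      p = fun xc => ∑ a, ε a * N a (xc.1 a) xc.2}

section Aux

variable {S A : Type*} [Fintype S] [DecidableEq S] [Fintype A] [DecidableEq A]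

/-- Direction 1: the stacked family is contained in the contracted family. -/
lemma stacked_subset_contracted
    (A₁ A₂ A₃ : Finset A)
    (hcover : A₁ ∪ A₂ ∪ A₃ = Finset.univ)
    (TM : Set (Matrix S S ℝ))
    (hmul : ∀ M ∈ TM, ∀ N ∈ TM, M * N ∈ TM)
    (hconv : ∀ M ∈ TM, ∀ N ∈ TM, ∀ t : ℝ, 0 ≤ t → t ≤ 1 →
      t • M + (1 - t) • N ∈ TM)
    (cond : ℝ → Prop)
    (Hle : ∀ x, cond x → 0 ≤ x)
    (Hadd : ∀ x y, cond x → 0 ≤ y → cond (x + y))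
    (Hmul : ∀ x y, cond x → cond y → cond (x * y)) :
    stackedFamily TM A₁ A₂ A₃ cond ⊆ contractedFamily TM cond := by
  classical
  rintro p ⟨δ, γ, lam, M, M', K, hδ, hδs, hγ, hlam, hlams, hM, hM', hK, rfl⟩
  have hmem : ∀ a : A, a ∈ A₁ ∪ A₃ ∨ a ∈ A₂ ∪ A₃ := by
    intro a
    have h : a ∈ A₁ ∪ A₂ ∪ A₃ := hcover ▸ Finset.mem_univ a
    rcases Finset.mem_union.mp h with h | h
    · rcases Finset.mem_union.mp h with h | h
      · exact Or.inl (Finset.mem_union_left _ h)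
      · exact Or.inr (Finset.mem_union_left _ h)
    · exact Or.inl (Finset.mem_union_right _ h)
  set ε : A → ℝ := fun a => (if a ∈ A₁ ∪ A₃ then δ a * γ else 0)
      + (if a ∈ A₂ ∪ A₃ then lam a else 0) with hεdef
  refine ⟨ε, fun a =>
    if a ∈ A₂ ∪ A₃ then
      (if a ∈ A₁ ∪ A₃ then
        (if ε a = 0 then M' else
          (δ a * γ / ε a) • (M a * M') + (lam a / ε a) • K a)
       else K a)
    else M a * M', ?_, ?_, ?_, ?_⟩
  · -- cond (ε a)
    intro a
    by_cases h2 : a ∈ A₂ ∪ A₃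
    · have h2c : cond (lam a) := hlam a h2
      have h1nn : 0 ≤ (if a ∈ A₁ ∪ A₃ then δ a * γ else 0) := by
        split
        · exact Hle _ (Hmul _ _ (hδ a (by assumption)) hγ)
        · exact le_rfl
      have h' := Hadd _ _ h2c h1nn
      rw [add_comm] at h'
      simp only [hεdef]
      rw [if_pos h2]
      exact h'
    · have h1 : a ∈ A₁ ∪ A₃ := (hmem a).resolve_right h2
      have h' : cond (δ a * γ + 0) := Hadd _ _ (Hmul _ _ (hδ a h1) hγ) le_rfl
      simp only [hεdef]
      rw [if_pos h1, if_neg h2]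
      exact h'
  · -- sum ε = 1
    have : ∑ a, ε a = ∑ a ∈ A₁ ∪ A₃, δ a * γ + ∑ a ∈ A₂ ∪ A₃, lam a := by
      simp only [hεdef]
      rw [Finset.sum_add_distrib, Finset.sum_ite_mem, Finset.sum_ite_mem,
        Finset.univ_inter, Finset.univ_inter]
    rw [this, ← Finset.sum_mul, hδs, one_mul]
    linarith
  · -- N a ∈ TM
    intro a
    by_cases h2 : a ∈ A₂ ∪ A₃ <;> by_cases h1 : a ∈ A₁ ∪ A₃
    · simp only [if_pos h2, if_pos h1]
      by_cases h0 : ε a = 0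
      · simp only [if_pos h0]; exact hM'
      · rw [if_neg h0]
        have hεa : ε a = δ a * γ + lam a := by
          simp only [hεdef]; rw [if_pos h1, if_pos h2]
        have hδγ : 0 ≤ δ a * γ := Hle _ (Hmul _ _ (hδ a h1) hγ)
        have hl : 0 ≤ lam a := Hle _ (hlam a h2)
        have hεpos : 0 < ε a := lt_of_le_of_ne (by rw [hεa]; linarith) (Ne.symm h0)
        have h1t : lam a / ε a = 1 - δ a * γ / ε a := by
          field_simp
          linarith [hεa]
        rw [h1t]
        exact hconv _ (hmul _ (hM a h1) _ hM') _ (hK a h2) _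
          (div_nonneg hδγ hεpos.le)
          ((div_le_one hεpos).mpr (by linarith [hεa]))
    · simp only [if_pos h2, if_neg h1]; exact hK a h2
    · simp only [if_neg h2]; exact hmul _ (hM a h1) _ hM'
    · exact absurd ((hmem a).resolve_right h2) h1
  · -- the function equality
    funext xc
    have key : ∀ a : A, ε a *
        (if a ∈ A₂ ∪ A₃ then
          (if a ∈ A₁ ∪ A₃ then
            (if ε a = 0 then M' else
              (δ a * γ / ε a) • (M a * M') + (lam a / ε a) • K a)
          else K a)
        else M a * M') (xc.1 a) xc.2 =
        (if a ∈ A₁ ∪ A₃ then δ a * γ * (M a * M') (xc.1 a) xc.2 else 0)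
        + (if a ∈ A₂ ∪ A₃ then lam a * K a (xc.1 a) xc.2 else 0) := by
      intro a
      by_cases h2 : a ∈ A₂ ∪ A₃ <;> by_cases h1 : a ∈ A₁ ∪ A₃
      · have hεa : ε a = δ a * γ + lam a := by
          simp only [hεdef]; rw [if_pos h1, if_pos h2]
        rw [if_pos h1, if_pos h2, if_pos h2, if_pos h1]
        by_cases h0 : ε a = 0
        · have hδγ : 0 ≤ δ a * γ := Hle _ (Hmul _ _ (hδ a h1) hγ)
          have hl : 0 ≤ lam a := Hle _ (hlam a h2)
          have h0' : δ a * γ + lam a = 0 := by rw [← hεa]; exact h0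
          have e1 : δ a * γ = 0 := by linarith
          have e2 : lam a = 0 := by linarith
          rw [h0, e1, e2]; ring
        · rw [if_neg h0]
          simp only [Matrix.add_apply, Matrix.smul_apply, smul_eq_mul]
          field_simp
      · rw [if_pos h2, if_pos h2, if_neg h1, if_neg h1]
        have hεa : ε a = lam a := by
          simp only [hεdef]; rw [if_neg h1, if_pos h2, zero_add]
        rw [hεa, zero_add]
      · rw [if_neg h2, if_neg h2, if_pos h1]
        have hεa : ε a = δ a * γ := by
          simp only [hεdef]; rw [if_pos h1, if_neg h2, add_zero]
        rw [hεa, add_zero]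
      · exact absurd ((hmem a).resolve_right h2) h1
    calc (∑ a ∈ A₁ ∪ A₃, δ a * γ * (M a * M') (xc.1 a) xc.2)
          + ∑ a ∈ A₂ ∪ A₃, lam a * K a (xc.1 a) xc.2
        = (∑ a, if a ∈ A₁ ∪ A₃ then δ a * γ * (M a * M') (xc.1 a) xc.2 else 0)
          + ∑ a, if a ∈ A₂ ∪ A₃ then lam a * K a (xc.1 a) xc.2 else 0 := by
          rw [Finset.sum_ite_mem, Finset.sum_ite_mem, Finset.univ_inter,
            Finset.univ_inter]
      _ = ∑ a, ((if a ∈ A₁ ∪ A₃ then δ a * γ * (M a * M') (xc.1 a) xc.2 else 0)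
          + (if a ∈ A₂ ∪ A₃ then lam a * K a (xc.1 a) xc.2 else 0)) := by
          rw [Finset.sum_add_distrib]
      _ = _ := (Finset.sum_congr rfl (fun a _ => (key a).symm))

/-- Sum over the whole type splits along the three disjoint parent sets. -/
lemma sum_cover_split (A₁ A₂ A₃ : Finset A)
    (h12 : Disjoint A₁ A₂) (h13 : Disjoint A₁ A₃) (h23 : Disjoint A₂ A₃)
    (hcover : A₁ ∪ A₂ ∪ A₃ = Finset.univ) (f : A → ℝ) :
    ∑ a, f a = ∑ a ∈ A₁, f a + ∑ a ∈ A₂, f a + ∑ a ∈ A₃, f a := by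
  rw [← hcover, Finset.sum_union (Finset.disjoint_union_left.mpr ⟨h13, h23⟩),
    Finset.sum_union h12]

/-- Direction 2, main case: if the `A₁ ∪ A₃` part of the weight is positive,
a member of the contracted family lies in the stacked family. -/
lemma contracted_mem_stacked_core
    (A₁ A₂ A₃ : Finset A)
    (h12 : Disjoint A₁ A₂) (h13 : Disjoint A₁ A₃) (h23 : Disjoint A₂ A₃)
    (hcover : A₁ ∪ A₂ ∪ A₃ = Finset.univ)
    (TM : Set (Matrix S S ℝ))
    (hsplit : ∀ (k : ℕ) (Ms : Fin k → Matrix S S ℝ), (∀ i, Ms i ∈ TM) →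
      ∃ N ∈ TM, IsUnit N ∧ ∀ i, Ms i * N⁻¹ ∈ TM)
    (cond : ℝ → Prop)
    (Hdiv : ∀ x y, cond x → 0 < y → cond (x / y))
    (Hhalf : ∀ x, cond x → cond (x / 2))
    (ε : A → ℝ) (N : A → Matrix S S ℝ)
    (hε : ∀ a, cond (ε a)) (hεs : ∑ a, ε a = 1) (hN : ∀ a, N a ∈ TM)
    (hγpos : 0 < ∑ a ∈ A₁ ∪ A₃, (if a ∈ A₁ then ε a else ε a / 2))
    (hγc : cond (∑ a ∈ A₁ ∪ A₃, (if a ∈ A₁ then ε a else ε a / 2))) :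
    (fun xc : (A → S) × S => ∑ a, ε a * N a (xc.1 a) xc.2) ∈
      stackedFamily TM A₁ A₂ A₃ cond := by
  classical
  obtain ⟨N', hN', hNu, hinv⟩ := hsplit (Fintype.card A)
    (fun i => N ((Fintype.equivFin A).symm i)) (fun i => hN _)
  have hinv' : ∀ a, N a * N'⁻¹ ∈ TM := fun a => by
    simpa using hinv ((Fintype.equivFin A) a)
  set g : A → ℝ := fun a => if a ∈ A₁ then ε a else ε a / 2 with hgdef
  set γ : ℝ := ∑ a ∈ A₁ ∪ A₃, g a with hγdef
  have hγne : γ ≠ 0 := ne_of_gt hγpos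
  have hnot31 : ∀ a ∈ A₃, a ∉ A₁ := fun a ha h => Finset.disjoint_left.mp h13 h ha
  have hnot32 : ∀ a ∈ A₃, a ∉ A₂ := fun a ha h => Finset.disjoint_left.mp h23 h ha
  have hγeq : γ = ∑ a ∈ A₁, ε a + ∑ a ∈ A₃, ε a / 2 := by
    rw [hγdef, Finset.sum_union h13]
    congr 1
    · exact Finset.sum_congr rfl (fun a ha => by simp [hgdef, ha])
    · exact Finset.sum_congr rfl (fun a ha => by simp [hgdef, hnot31 a ha])
  have hlameq : ∑ a ∈ A₂ ∪ A₃, (if a ∈ A₂ then ε a else ε a / 2)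
      = ∑ a ∈ A₂, ε a + ∑ a ∈ A₃, ε a / 2 := by
    rw [Finset.sum_union h23]
    congr 1
    · exact Finset.sum_congr rfl (fun a ha => by simp [ha])
    · exact Finset.sum_congr rfl (fun a ha => by simp [hnot32 a ha])
  have huniv := sum_cover_split A₁ A₂ A₃ h12 h13 h23 hcover ε
  have hhalf3 : ∑ a ∈ A₃, ε a / 2 + ∑ a ∈ A₃, ε a / 2 = ∑ a ∈ A₃, ε a := by
    rw [← Finset.sum_add_distrib]
    exact Finset.sum_congr rfl (fun a _ => by ring)
  have hNN : ∀ a, (N a * N'⁻¹ * N') = N a := fun a => by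
    rw [mul_assoc, Matrix.nonsing_inv_mul N'
      ((Matrix.isUnit_iff_isUnit_det N').mp hNu), mul_one]
  refine ⟨fun a => g a / γ, γ, fun a => if a ∈ A₂ then ε a else ε a / 2,
    fun a => N a * N'⁻¹, N', N, ?_, ?_, hγc, ?_, ?_,
    fun a _ => hinv' a, hN', fun a _ => hN a, ?_⟩
  · intro a _
    by_cases h : a ∈ A₁
    · simpa [hgdef, h] using Hdiv _ _ (hε a) hγpos
    · simpa [hgdef, h] using Hdiv _ _ (Hhalf _ (hε a)) hγpos
  · rw [← Finset.sum_div, ← hγdef, div_self hγne]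
  · intro a _
    by_cases h : a ∈ A₂
    · simpa [h] using hε a
    · simpa [h] using Hhalf _ (hε a)
  · rw [hlameq]
    rw [hγeq] at *
    linarith
  · funext xc
    have hterm : ∀ a, g a / γ * γ * (N a * N'⁻¹ * N') (xc.1 a) xc.2
        = g a * N a (xc.1 a) xc.2 := fun a => by
      rw [hNN, div_mul_cancel₀ _ hγne]
    have h1 : ∑ a ∈ A₁ ∪ A₃, g a / γ * γ * (N a * N'⁻¹ * N') (xc.1 a) xc.2
        = ∑ a ∈ A₁, ε a * N a (xc.1 a) xc.2
          + ∑ a ∈ A₃, ε a / 2 * N a (xc.1 a) xc.2 := by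
      rw [Finset.sum_congr rfl (fun a _ => hterm a), Finset.sum_union h13]
      congr 1
      · exact Finset.sum_congr rfl (fun a ha => by simp [hgdef, ha])
      · exact Finset.sum_congr rfl (fun a ha => by simp [hgdef, hnot31 a ha])
    have h2 : ∑ a ∈ A₂ ∪ A₃, (if a ∈ A₂ then ε a else ε a / 2) * N a (xc.1 a) xc.2
        = ∑ a ∈ A₂, ε a * N a (xc.1 a) xc.2
          + ∑ a ∈ A₃, ε a / 2 * N a (xc.1 a) xc.2 := by
      rw [Finset.sum_union h23]
      congr 1
      · exact Finset.sum_congr rfl (fun a ha => by simp [ha])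
      · exact Finset.sum_congr rfl (fun a ha => by simp [hnot32 a ha])
    have huniv' := sum_cover_split A₁ A₂ A₃ h12 h13 h23 hcover
      (fun a => ε a * N a (xc.1 a) xc.2)
    have hhalf3' : ∑ a ∈ A₃, ε a / 2 * N a (xc.1 a) xc.2
        + ∑ a ∈ A₃, ε a / 2 * N a (xc.1 a) xc.2
        = ∑ a ∈ A₃, ε a * N a (xc.1 a) xc.2 := by
      rw [← Finset.sum_add_distrib]
      exact Finset.sum_congr rfl (fun a _ => by ring)
    rw [h1, h2, huniv']
    linarith

end Aux

/-- for a stacked reticulation `b → c` with parent sets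
`A₁, A₂, A₃` (pairwise disjoint, `A₁ ∪ A₃` nonempty, covering `A`), if the
transition model `TM` is multiplicatively closed, closed under convex
combinations, and splittable, then the families of conditional distributions
before and after contracting the edge `b → c` coincide; the same holds when
all weights are required to be strictly positive. -/
theorem stacked_reticulation_contraction
    {S A : Type*} [Fintype S] [Nonempty S] [DecidableEq S]
    [Fintype A] [DecidableEq A]
    (A₁ A₂ A₃ : Finset A)
    (h12 : Disjoint A₁ A₂) (h13 : Disjoint A₁ A₃) (h23 : Disjoint A₂ A₃)
    (hcover : A₁ ∪ A₂ ∪ A₃ = Finset.univ)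
    (hne : (A₁ ∪ A₃).Nonempty)
    (TM : Set (Matrix S S ℝ))
    (hMarkov : ∀ M ∈ TM, IsMarkov M)
    (hmul : ∀ M ∈ TM, ∀ N ∈ TM, M * N ∈ TM)
    (hconv : ∀ M ∈ TM, ∀ N ∈ TM, ∀ t : ℝ, 0 ≤ t → t ≤ 1 →
      t • M + (1 - t) • N ∈ TM)
    (hsplit : ∀ (k : ℕ) (Ms : Fin k → Matrix S S ℝ), (∀ i, Ms i ∈ TM) →
      ∃ N ∈ TM, IsUnit N ∧ ∀ i, Ms i * N⁻¹ ∈ TM) :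
    stackedFamily TM A₁ A₂ A₃ (fun t => 0 ≤ t) =
        contractedFamily TM (fun t => 0 ≤ t) ∧
      stackedFamily TM A₁ A₂ A₃ (fun t => 0 < t) =
        contractedFamily TM (fun t => 0 < t) := by
  classical
  constructor
  · -- nonnegative weights
    apply Set.Subset.antisymm
    · exact stacked_subset_contracted A₁ A₂ A₃ hcover TM hmul hconv _
        (fun x hx => hx) (fun x y hx hy => add_nonneg hx hy)
        (fun x y hx hy => mul_nonneg hx hy)
    · rintro p ⟨ε, N, hε, hεs, hN, rfl⟩
      by_cases hγpos : 0 < ∑ a ∈ A₁ ∪ A₃, (if a ∈ A₁ then ε a else ε a / 2)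
      · exact contracted_mem_stacked_core A₁ A₂ A₃ h12 h13 h23 hcover TM hsplit _
          (fun x y hx hy => div_nonneg hx hy.le)
          (fun x hx => div_nonneg hx (by norm_num)) ε N hε hεs hN hγpos hγpos.le
      · -- degenerate case: all weight on `A₂ ∪ A₃`
        have hnn : ∀ a ∈ A₁ ∪ A₃, 0 ≤ (if a ∈ A₁ then ε a else ε a / 2) := by
          intro a _
          split
          · exact hε a
          · exact div_nonneg (hε a) (by norm_num)
        have hγ0 : ∑ a ∈ A₁ ∪ A₃, (if a ∈ A₁ then ε a else ε a / 2) = 0 :=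
          le_antisymm (not_lt.mp hγpos) (Finset.sum_nonneg hnn)
        have hz : ∀ a ∈ A₁ ∪ A₃, ε a = 0 := by
          intro a ha
          have h0 := (Finset.sum_eq_zero_iff_of_nonneg hnn).mp hγ0 a ha
          by_cases h : a ∈ A₁
          · simpa [h] using h0
          · rw [if_neg h] at h0; linarith
        obtain ⟨a₀, ha₀⟩ := hne
        obtain ⟨N', hN', -, -⟩ := hsplit 0 Fin.elim0 (fun i => i.elim0)
        have hsumA1 : ∑ a ∈ A₁, ε a = 0 :=
          Finset.sum_eq_zero (fun a ha => hz a (Finset.mem_union_left _ ha))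
        have huniv := sum_cover_split A₁ A₂ A₃ h12 h13 h23 hcover ε
        have hsumA3 : ∑ a ∈ A₃, ε a = 0 :=
          Finset.sum_eq_zero (fun a ha => hz a (Finset.mem_union_right _ ha))
        refine ⟨fun a => if a = a₀ then 1 else 0, 0, ε, fun _ => N', N', N,
          ?_, ?_, le_rfl, fun a _ => hε a, ?_, fun _ _ => hN', hN',
          fun a _ => hN a, ?_⟩
        · intro a _
          by_cases h : a = a₀ <;> simp [h]
        · rw [Finset.sum_ite_eq' (A₁ ∪ A₃) a₀ (fun _ => (1:ℝ)), if_pos ha₀]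
        · rw [Finset.sum_union h23]
          linarith
        · funext xc
          have h0 : ∑ a ∈ A₁ ∪ A₃,
              (if a = a₀ then (1:ℝ) else 0) * 0 * (N' * N') (xc.1 a) xc.2 = 0 :=
            Finset.sum_eq_zero (fun a _ => by ring)
          have huniv' := sum_cover_split A₁ A₂ A₃ h12 h13 h23 hcover
            (fun a => ε a * N a (xc.1 a) xc.2)
          have hsumA1' : ∑ a ∈ A₁, ε a * N a (xc.1 a) xc.2 = 0 :=
            Finset.sum_eq_zero (fun a ha => by
              rw [hz a (Finset.mem_union_left _ ha), zero_mul])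
          rw [h0, zero_add, Finset.sum_union h23, huniv', hsumA1']
          ring
  · -- positive weights
    apply Set.Subset.antisymm
    · exact stacked_subset_contracted A₁ A₂ A₃ hcover TM hmul hconv _
        (fun x hx => hx.le) (fun x y hx hy => by linarith)
        (fun x y hx hy => mul_pos hx hy)
    · rintro p ⟨ε, N, hε, hεs, hN, rfl⟩
      have hγpos : 0 < ∑ a ∈ A₁ ∪ A₃, (if a ∈ A₁ then ε a else ε a / 2) :=
        Finset.sum_pos (fun a _ => by
          split
          · exact hε a
          · exact half_pos (hε a)) hne
      exact contracted_mem_stacked_core A₁ A₂ A₃ h12 h13 h23 hcover TM hsplit _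
        (fun x y hx hy => div_pos hx hy)
        (fun x hx => half_pos hx) ε N hε hεs hN hγpos hγpos
end

section
/- Let Σ be a finite type, A a finite type, π : A → ℝ nonnegative with Σ_a π(a) = 1, and M_a a Markov matrix on Σ for each a ∈ A. Define p(c | x) = Σ_{a ∈ A} π(a)·M_a(x(a), c) for x : A → Σ and c ∈ Σ. Suppose x, y, x', y' : A → Σ are such that for every a ∈ A the unordered pairs {x(a), y(a)} and {x'(a), y'(a)} coincide, i.e., either (x'(a) = x(a) and y'(a) = y(a)) or (x'(a) = y(a) and y'(a) = x(a)). Then for every c ∈ Σ, p(c | x) + p(c | y) = p(c | x') + p(c | y'). -/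
/-- linear relations satisfied by reticulation conditional
distributions: if for every `a` the unordered pairs `{x a, y a}` and
`{x' a, y' a}` coincide, then `p(c|x) + p(c|y) = p(c|x') + p(c|y')`, where
`p(c|x) = ∑ a, π a * M a (x a) c`. -/
theorem reticulation_linear_relations
    {S A : Type*} [Fintype S] [Fintype A]
    (π : A → ℝ) (hπ0 : ∀ a, 0 ≤ π a) (hπ1 : ∑ a, π a = 1)
    (M : A → Matrix S S ℝ)
    (hM : ∀ a, (∀ i j, 0 ≤ M a i j) ∧ ∀ i, ∑ j, M a i j = 1)
    (x y x' y' : A → S)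
    (hpair : ∀ a, (x' a = x a ∧ y' a = y a) ∨ (x' a = y a ∧ y' a = x a))
    (c : S) :
    (∑ a, π a * M a (x a) c) + (∑ a, π a * M a (y a) c) =
      (∑ a, π a * M a (x' a) c) + (∑ a, π a * M a (y' a) c) := by
  rw [← Finset.sum_add_distrib, ← Finset.sum_add_distrib]
  apply Finset.sum_congr rfl
  intro a _
  rcases hpair a with ⟨h1, h2⟩ | ⟨h1, h2⟩ <;> rw [h1, h2] <;> ring
end

section
/- Let Σ be a finite type with a distinguished element o ∈ Σ, A a finite type, π : A → ℝ, and M_a : Matrix Σ Σ ℝ for each a ∈ A. Define p(c | x) = Σ_{a ∈ A} π(a)·M_a(x(a), c) for x : A → Σ and c ∈ Σ. For x : A → Σ let T = {a ∈ A : x(a) ≠ o}, and for a ∈ T let x⁽ᵃ⁾ : A → Σ be given by x⁽ᵃ⁾(a) = x(a) and x⁽ᵃ⁾(a') = o for a' ≠ a; let ō denote the constant function with value o. Then for every c ∈ Σ, p(c | x) = Σ_{a ∈ T} p(c | x⁽ᵃ⁾) − ((card T : ℝ) − 1)·p(c | ō). -/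
/-- every coordinate `p(c|x)` of a reticulation conditional
distribution `p(c|x) = ∑ a, π a * M a (x a) c` is the linear combination
`∑_{a ∈ T} p(c|x⁽ᵃ⁾) - (card T - 1) * p(c|ō)`, where `T = {a : x a ≠ o}`,
`x⁽ᵃ⁾` agrees with `x` at `a` and equals `o` elsewhere, and `ō` is the
constant function with value `o`. -/
theorem reticulation_coordinate_relation
    {S A : Type*} [Fintype S] [Fintype A] [DecidableEq S] [DecidableEq A]
    (o : S) (π : A → ℝ) (M : A → Matrix S S ℝ) (x : A → S) (c : S) :
    (∑ a, π a * M a (x a) c) =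
      (∑ a ∈ Finset.univ.filter (fun a => x a ≠ o),
          ∑ a', π a' * M a' (if a' = a then x a' else o) c)
        - (((Finset.univ.filter (fun a => x a ≠ o)).card : ℝ) - 1) *
            ∑ a, π a * M a o c := by
  classical
  set T := Finset.univ.filter (fun a => x a ≠ o) with hT
  set P := ∑ a, π a * M a o c with hP
  have h1 : ∀ a : A, (∑ a', π a' * M a' (if a' = a then x a' else o) c)
      = P + (π a * M a (x a) c - π a * M a o c) := by
    intro a
    have : (∑ a', π a' * M a' (if a' = a then x a' else o) c) - P
        = π a * M a (x a) c - π a * M a o c := by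
      rw [hP, ← Finset.sum_sub_distrib]
      rw [Finset.sum_eq_single a]
      · simp
      · intro b _ hb; simp [hb]
      · simp
    linarith
  rw [Finset.sum_congr rfl (fun a _ => h1 a), Finset.sum_add_distrib,
    Finset.sum_const, Finset.sum_sub_distrib, nsmul_eq_mul]
  have hsplit : (∑ a, π a * M a (x a) c)
      = (∑ a ∈ T, π a * M a (x a) c) + ∑ a ∈ Tᶜ, π a * M a o c := by
    rw [← Finset.sum_add_sum_compl T]
    congr 1
    apply Finset.sum_congr rfl
    intro a ha
    have : x a = o := by
      by_contra h
      simp [hT, h] at ha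
    rw [this]
  have hPsplit : P = (∑ a ∈ T, π a * M a o c) + ∑ a ∈ Tᶜ, π a * M a o c := by
    rw [hP, ← Finset.sum_add_sum_compl T]
  rw [hsplit]
  ring_nf
  linarith [hPsplit]
end

section
/- Let k ≥ 2 and m ≥ 1, let Σ = Fin k be the state set with distinguished element o ∈ Σ and a second distinguished element e ∈ Σ with e ≠ o, and let A = Fin m. In the multivariate polynomial ring R = MvPolynomial (A ⊕ (A × Σ × Σ)) ℝ, with variables Xπ(a) for a ∈ A and XM(a, i, j) for a ∈ A and i, j ∈ Σ, define for each c ∈ Σ and each x : A → Σ the polynomial q(c, x) = Σ_{a ∈ A} Xπ(a)·XM(a, x(a), c). Let S = {(c, x) : c ∈ Σ, c ≠ e, x : A → Σ, card {a ∈ A : x(a) ≠ o} ≤ 1}. Then the family of polynomials (q(c, x))_{(c,x) ∈ S} is algebraically independent over ℝ. -/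
open MvPolynomial

namespace RetAux

variable {k m : ℕ}

/-- The index subtype. -/
abbrev Idx (k m : ℕ) (o e : Fin k) :=
  {s : Fin k × (Fin m → Fin k) //
      s.1 ≠ e ∧ (Finset.univ.filter fun a => s.2 a ≠ o).card ≤ 1}

def constS (o e : Fin k) (c : Fin k) (hc : c ≠ e) : Idx k m o e :=
  ⟨(c, fun _ => o), hc, by simp⟩

def singS (o e : Fin k) (c : Fin k) (hc : c ≠ e) (a : Fin m) (i : Fin k) :
    Idx k m o e :=
  ⟨(c, fun b => if b = a then i else o), hc, by
    apply Finset.card_le_one.mpr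
    intro p hp q hq
    simp only [Finset.mem_filter, Finset.mem_univ, true_and] at hp hq
    have hpa : p = a := by by_contra h; simp [h] at hp
    have hqa : q = a := by by_contra h; simp [h] at hq
    rw [hpa, hqa]⟩

noncomputable def v (o e : Fin k) (a0 : Fin m) :
    Fin m ⊕ (Fin m × Fin k × Fin k) → MvPolynomial (Idx k m o e) ℝ
  | Sum.inl _ => 1
  | Sum.inr (a, i, c) =>
    if hc : c = e then 0
    else if _ : i = o then
      (if a = a0 then MvPolynomial.X (constS o e c hc) else 0)
    else
      MvPolynomial.X (singS o e c hc a i) -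
        (if a = a0 then 0 else MvPolynomial.X (constS o e c hc))

end RetAux

/-- in the polynomial ring with variables `Xπ a` (`a : Fin m`)
and `XM (a, i, j)` (`a : Fin m`, `i j : Fin k`), the polynomials
`q(c, x) = ∑ a, Xπ a * XM (a, x a, c)` indexed by pairs `(c, x)` with `c ≠ e`
and `x : Fin m → Fin k` having at most one coordinate different from `o`,
form an algebraically independent family over `ℝ`. -/
theorem reticulation_coordinates_algebraicallyIndependent
    (k m : ℕ) (hk : 2 ≤ k) (hm : 1 ≤ m) (o e : Fin k) (hoe : e ≠ o) :
    AlgebraicIndependent ℝ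
      (fun s : {s : Fin k × (Fin m → Fin k) //
          s.1 ≠ e ∧ (Finset.univ.filter fun a => s.2 a ≠ o).card ≤ 1} =>
        ∑ a : Fin m,
          (MvPolynomial.X (Sum.inl a) :
              MvPolynomial (Fin m ⊕ (Fin m × Fin k × Fin k)) ℝ) *
            MvPolynomial.X (Sum.inr (a, s.1.2 a, s.1.1))) := by
  classical
  set a0 : Fin m := ⟨0, hm⟩ with ha0
  apply AlgebraicIndependent.of_comp (MvPolynomial.aeval (RetAux.v o e a0))
  have hcomp : (MvPolynomial.aeval (RetAux.v o e a0)) ∘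
      (fun s : RetAux.Idx k m o e =>
        ∑ a : Fin m,
          (MvPolynomial.X (Sum.inl a) :
              MvPolynomial (Fin m ⊕ (Fin m × Fin k × Fin k)) ℝ) *
            MvPolynomial.X (Sum.inr (a, s.1.2 a, s.1.1)))
      = fun s => MvPolynomial.X s := by
    funext s
    obtain ⟨⟨c, x⟩, hc, hcard⟩ := s
    have hcard' : (Finset.univ.filter fun a => x a ≠ o).card ≤ 1 := hcard
    simp only [Function.comp_apply, map_sum, map_mul, MvPolynomial.aeval_X]
    have hsum : ∀ a : Fin m,
        RetAux.v o e a0 (Sum.inl a) * RetAux.v o e a0 (Sum.inr (a, x a, c))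
          = RetAux.v o e a0 (Sum.inr (a, x a, c)) := by
      intro a; simp [RetAux.v]
    simp only [hsum]
    by_cases hx : ∀ b, x b = o
    · have hxo : x = fun _ => o := funext hx
      have hval : ∀ a : Fin m, RetAux.v o e a0 (Sum.inr (a, x a, c))
          = if a = a0 then MvPolynomial.X (RetAux.constS o e c hc) else 0 := by
        intro a
        simp [RetAux.v, hc, hx a]
      simp only [hval]
      rw [Finset.sum_ite_eq' Finset.univ a0]
      simp only [Finset.mem_univ, if_true]
      congr 1
      exact Subtype.ext (by simp [RetAux.constS, hxo])
    · push_neg at hx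
      obtain ⟨a', ha'⟩ := hx
      have hother : ∀ b, b ≠ a' → x b = o := by
        intro b hb
        by_contra hbo
        have hsub : ({a', b} : Finset (Fin m)) ⊆
            Finset.univ.filter fun a => x a ≠ o := by
          intro z hz
          simp only [Finset.mem_insert, Finset.mem_singleton] at hz
          rcases hz with rfl | rfl <;> simp [ha', hbo]
        have : (2 : ℕ) ≤ (Finset.univ.filter fun a => x a ≠ o).card := by
          calc (2 : ℕ) = ({a', b} : Finset (Fin m)).card := by
                rw [Finset.card_insert_of_notMem (by simpa using (Ne.symm hb)),
                  Finset.card_singleton]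
            _ ≤ _ := Finset.card_le_card hsub
        omega
      have hxeq : x = fun b => if b = a' then x a' else o := by
        funext b
        by_cases hb : b = a'
        · simp [hb]
        · simp [hb, hother b hb]
      have hXs : MvPolynomial.X (RetAux.singS o e c hc a' (x a'))
          = (MvPolynomial.X ⟨(c, x), hc, hcard⟩ :
              MvPolynomial (RetAux.Idx k m o e) ℝ) := by
        congr 1
        exact Subtype.ext (by simp [RetAux.singS, ← hxeq])
      rw [← Finset.add_sum_erase _ _ (Finset.mem_univ a')]
      have hva' : RetAux.v o e a0 (Sum.inr (a', x a', c))
          = MvPolynomial.X (RetAux.singS o e c hc a' (x a')) -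
              (if a' = a0 then 0 else MvPolynomial.X (RetAux.constS o e c hc)) := by
        simp [RetAux.v, hc, ha']
      have hvb : ∀ b ∈ Finset.univ.erase a',
          RetAux.v o e a0 (Sum.inr (b, x b, c))
            = if b = a0 then MvPolynomial.X (RetAux.constS o e c hc) else 0 := by
        intro b hb
        have : x b = o := hother b (Finset.ne_of_mem_erase hb)
        simp [RetAux.v, hc, this]
      rw [Finset.sum_congr rfl hvb, Finset.sum_ite_eq' _ a0]
      rw [hva', hXs]
      by_cases haa : a' = a0
      · have : a0 ∉ Finset.univ.erase a' := by simp [haa]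
        simp [haa, this]
      · have : a0 ∈ Finset.univ.erase a' := by
          simp [Finset.mem_erase, Ne.symm haa]
        simp only [haa, if_false, this, if_true]
        ring
  rw [hcomp]
  exact MvPolynomial.algebraicIndependent_X _ _
end

section
/- Let R_A, R_B, R_C be finite types and let P : R_A × R_B × R_C → ℝ be a nonnegative function (a joint distribution of (X_A, X_B, X_C)) satisfying the conditional independence X_A ⊥ X_B | X_C, i.e., for all a ∈ R_A, b ∈ R_B, c ∈ R_C: P(a,b,c) · (Σ_{a',b'} P(a',b',c)) = (Σ_{b'} P(a,b',c)) · (Σ_{a'} P(a',b,c)). Then the flattening matrix F ∈ Matrix R_A R_B ℝ with entries F(a,b) = Σ_{c ∈ R_C} P(a,b,c) has rank at most card R_C. -/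
/-- if a nonnegative joint distribution `P` on
`R_A × R_B × R_C` satisfies the conditional independence `X_A ⊥ X_B | X_C`
(in division-free form), then the flattening matrix
`(a, b) ↦ ∑ c, P (a, b, c)` has rank at most `card R_C`. -/
theorem condIndep_flattening_rank_le_card
    {RA RB RC : Type*} [Fintype RA] [Fintype RB] [Fintype RC]
    (P : RA × RB × RC → ℝ)
    (hP : ∀ a b c, 0 ≤ P (a, b, c))
    (hCI : ∀ a b c, P (a, b, c) * (∑ a', ∑ b', P (a', b', c)) =
      (∑ b', P (a, b', c)) * (∑ a', P (a', b, c))) :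
    (Matrix.of fun a b => ∑ c, P (a, b, c)).rank ≤ Fintype.card RC := by
  classical
  set S : RC → ℝ := fun c => ∑ a', ∑ b', P (a', b', c) with hS
  set M₁ : Matrix RA RC ℝ := Matrix.of fun a c => ∑ b', P (a, b', c) with hM₁
  set M₂ : Matrix RC RB ℝ := Matrix.of fun c b =>
    if S c = 0 then 0 else (∑ a', P (a', b, c)) / S c with hM₂
  have key : (Matrix.of fun a b => ∑ c, P (a, b, c)) = M₁ * M₂ := by
    ext a b
    simp only [Matrix.mul_apply, Matrix.of_apply, hM₁, hM₂]
    refine Finset.sum_congr rfl fun c _ => ?_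
    by_cases h : S c = 0
    · simp only [h, if_true, mul_zero]
      have hle : P (a, b, c) ≤ S c := by
        rw [hS]
        calc P (a, b, c) ≤ ∑ b', P (a, b', c) :=
              Finset.single_le_sum (fun b' _ => hP a b' c) (Finset.mem_univ b)
          _ ≤ ∑ a', ∑ b', P (a', b', c) :=
              Finset.single_le_sum (fun a' _ =>
                Finset.sum_nonneg fun b' _ => hP a' b' c) (Finset.mem_univ a)
      have := hP a b c
      linarith [hle, h ▸ hle]
    · simp only [h, if_false]
      field_simp
      simp only [hS]
      linear_combination hCI a b c
  rw [key]
  exact (Matrix.rank_mul_le_left M₁ M₂).trans (Matrix.rank_le_card_width M₁)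
end

section
/- Let (V, pa) be a DAG in topological order with finite state spaces σ(i), and let f be a system of Markov kernels on it with joint distribution p(x) = Π_{i∈V} f(i) x (x(i)). If S ⊆ V is ancestral, i.e., pa(i) ⊆ S for every i ∈ S, then for every x : Π i, σ(i), the marginal on S satisfies Σ_{y : y agrees with x on S} p(y) = Π_{i ∈ S} f(i) x (x(i)). -/
/-- for a DAG in topological order with a system of Markov
kernels, the marginal of the joint distribution `p(x) = ∏ i, f i x (x i)`
onto an ancestral set `S` factorizes as `∏ i ∈ S, f i x (x i)`. -/
theorem ancestral_marginal_factorization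
    {V : Type*} [Fintype V] [LinearOrder V]
    (pa : V → Finset V) (hpa : ∀ i, ∀ j ∈ pa i, j < i)
    (σ : V → Type*) [∀ i, Fintype (σ i)] [∀ i, Nonempty (σ i)]
    [∀ i, DecidableEq (σ i)]
    (f : ∀ i, (∀ j, σ j) → σ i → ℝ)
    (hloc : ∀ i, ∀ x y : ∀ j, σ j, (∀ j ∈ pa i, x j = y j) → f i x = f i y)
    (hnn : ∀ i x c, 0 ≤ f i x c)
    (hsum : ∀ i x, ∑ c, f i x c = 1)
    (S : Finset V) (hanc : ∀ i ∈ S, pa i ⊆ S)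
    (x : ∀ j, σ j) :
    ∑ y ∈ Finset.univ.filter (fun y : ∀ j, σ j => ∀ i ∈ S, y i = x i),
        ∏ i, f i y (y i) = ∏ i ∈ S, f i x (x i) := by
  classical
  suffices H : ∀ n (W : Finset V), (W \ S).card = n → S ⊆ W →
      (∀ i, i ∉ W → ∀ j ∈ W, i ∉ pa j) → ∀ x : ∀ j, σ j,
      ∑ y ∈ Finset.univ.filter (fun y : ∀ j, σ j => ∀ i, i ∉ W \ S → y i = x i),
        ∏ i ∈ W, f i y (y i) = ∏ i ∈ S, f i x (x i) by
    have h := H (Finset.univ \ S).card Finset.univ rfl (Finset.subset_univ S)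
      (by simp) x
    rw [← h]
    apply Finset.sum_congr _ (fun y _ => rfl)
    apply Finset.filter_congr
    intro y _
    constructor
    · intro hy i hi
      exact hy i (by simpa using hi)
    · intro hy i hi
      exact hy i (by simpa using hi)
  intro n
  induction n with
  | zero =>
    intro W hcard hSW _ x
    have hWS : W = S := by
      have : W \ S = ∅ := Finset.card_eq_zero.mp hcard
      exact le_antisymm (by
        intro i hi
        by_contra hiS
        exact absurd (Finset.mem_sdiff.mpr ⟨hi, hiS⟩) (by simp [this])) hSW
    subst hWS
    have hfilter : Finset.univ.filter
        (fun y : ∀ j, σ j => ∀ i, i ∉ W \ W → y i = x i) = {x} := by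
      ext y
      simp [funext_iff]
    rw [hfilter, Finset.sum_singleton]
  | succ n ih =>
    intro W hcard hSW hpaW x
    have hne : (W \ S).Nonempty := Finset.card_pos.mp (by omega)
    set m := (W \ S).max' hne with hm
    have hmWS : m ∈ W \ S := (W \ S).max'_mem hne
    have hmW : m ∈ W := (Finset.mem_sdiff.mp hmWS).1
    have hmS : m ∉ S := (Finset.mem_sdiff.mp hmWS).2
    -- m is not a parent of anything in W
    have hmtop : ∀ i ∈ W, m ∉ pa i := by
      intro i hiW hmpa
      have hmi : m < i := hpa i m hmpa
      by_cases hiS : i ∈ S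
      · exact hmS (hanc i hiS hmpa)
      · have : i ≤ m := (W \ S).le_max' i (Finset.mem_sdiff.mpr ⟨hiW, hiS⟩)
        exact absurd hmi (not_lt.mpr this)
    set W' := W.erase m with hW'
    have hW'S : W' \ S = (W \ S).erase m := by
      ext i
      simp [hW', Finset.mem_erase, Finset.mem_sdiff]
      tauto
    have hcard' : (W' \ S).card = n := by
      rw [hW'S, Finset.card_erase_of_mem hmWS, hcard]
      omega
    have hSW' : S ⊆ W' := by
      intro i hiS
      exact Finset.mem_erase.mpr ⟨fun h => hmS (h ▸ hiS), hSW hiS⟩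
    have hpaW' : ∀ i, i ∉ W' → ∀ j ∈ W', i ∉ pa j := by
      intro i hiW' j hjW'
      by_cases him : i = m
      · exact him ▸ hmtop j (Finset.mem_of_mem_erase hjW')
      · exact hpaW i (fun hiW => hiW' (Finset.mem_erase.mpr ⟨him, hiW⟩)) j
          (Finset.mem_of_mem_erase hjW')
    -- bijection: y in the W-filter ↔ (c, y₀) with y₀ in the W'-filter
    have key : ∑ y ∈ Finset.univ.filter
          (fun y : ∀ j, σ j => ∀ i, i ∉ W \ S → y i = x i),
          ∏ i ∈ W, f i y (y i)
        = ∑ p ∈ (Finset.univ : Finset (σ m)) ×ˢ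
            Finset.univ.filter
              (fun y : ∀ j, σ j => ∀ i, i ∉ W' \ S → y i = x i),
            ∏ i ∈ W, f i (Function.update p.2 m p.1)
              ((Function.update p.2 m p.1) i) := by
      apply Finset.sum_nbij'
        (i := fun y => ((y m, Function.update y m (x m)) : σ m × (∀ j, σ j)))
        (j := fun p => Function.update p.2 m p.1)
      · intro y hy
        simp only [Finset.mem_filter, Finset.mem_univ, true_and] at hy
        simp only [Finset.mem_product, Finset.mem_univ, Finset.mem_filter, true_and]
        intro i hi
        by_cases him : i = m
        · subst him; simp
        · rw [Function.update_of_ne him]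
          apply hy
          rw [hW'S] at hi
          intro hWS'
          exact hi (Finset.mem_erase.mpr ⟨him, hWS'⟩)
      · intro p hp
        simp only [Finset.mem_product, Finset.mem_univ, Finset.mem_filter,
          true_and] at hp
        simp only [Finset.mem_filter, Finset.mem_univ, true_and]
        intro i hi
        have him : i ≠ m := fun h => hi (h ▸ hmWS)
        rw [Function.update_of_ne him]
        apply hp
        rw [hW'S]
        exact fun h => hi (Finset.mem_of_mem_erase h)
      · intro y _
        simp only
        rw [Function.update_idem, Function.update_eq_self]
      · intro p hp
        simp only [Finset.mem_product, Finset.mem_univ, Finset.mem_filter,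
          true_and] at hp
        have hpm : p.2 m = x m := by
          apply hp
          rw [hW'S]
          simp
        have hup : Function.update p.2 m (x m) = p.2 := by
          rw [← hpm]
          exact Function.update_eq_self m p.2
        simp [hup]
      · intro y hy
        simp only [Finset.mem_filter, Finset.mem_univ, true_and] at hy
        have hym : y m = x m ∨ True := Or.inr trivial
        congr 1
        rw [Function.update_idem, Function.update_eq_self]
    rw [key, Finset.sum_product_right]
    rw [← ih W' hcard' hSW' hpaW' x]
    apply Finset.sum_congr rfl
    intro y hy
    -- inner sum over c : σ m
    have hstep : ∀ c : σ m,
        ∏ i ∈ W, f i (Function.update y m c) ((Function.update y m c) i)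
        = f m y c * ∏ i ∈ W', f i y (y i) := by
      intro c
      rw [← Finset.prod_erase_mul W _ hmW, mul_comm, ← hW']
      congr 1
      · have h1 : f m (Function.update y m c) = f m y := by
          apply hloc
          intro j hj
          have hjm : j ≠ m := fun h =>
            absurd (hpa m j hj) (by rw [h]; exact lt_irrefl m)
          rw [Function.update_of_ne hjm]
        rw [h1, Function.update_self]
      · apply Finset.prod_congr rfl
        intro i hi
        have him : i ≠ m := (Finset.mem_erase.mp hi).1
        rw [Function.update_of_ne him]
        refine congrFun (hloc i _ y ?_) (y i)
        intro j hj
        have hjm : j ≠ m := by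
          intro h
          exact hmtop i (Finset.mem_of_mem_erase hi) (h ▸ hj)
        rw [Function.update_of_ne hjm]
    calc ∑ c : σ m, ∏ i ∈ W, f i (Function.update y m c)
            ((Function.update y m c) i)
        = ∑ c : σ m, f m y c * ∏ i ∈ W', f i y (y i) := by
          exact Finset.sum_congr rfl fun c _ => hstep c
      _ = (∑ c : σ m, f m y c) * ∏ i ∈ W', f i y (y i) := by
          rw [Finset.sum_mul]
      _ = ∏ i ∈ W', f i y (y i) := by rw [hsum, one_mul]
end

section
/- Let W, B, B' be finite types, set V₁ = W ⊕ B and V₂ = W ⊕ B', fix finite nonempty state spaces σ(w) for w ∈ W, τ(b) for b ∈ B, τ'(b') for b' ∈ B', and disjoint subsets A, C ⊆ W. Let pa₁ : V₁ → Finset V₁, pa₂ : V₂ → Finset V₂, and let f₁ (resp. f₂) be a family of functions f₁(i) : (Π j ∈ V₁, state(j)) → state(i) → ℝ with f₁(i) z depending only on the coordinates of z in pa₁(i) (and similarly for f₂ with pa₂). Assume: (i) the triple (inl''A, inr''B, inl''C) is a local structure in (V₁, pa₁), and (inl''A, inr''B', inl''C) is a local structure in (V₂, pa₂); (ii) for every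 w ∈ W with w ∉ C, pa₁(inl w) ⊆ inl''W, pa₂(inl w) corresponds to pa₁(inl w) under the identification of W-vertices, and f₁(inl w) and f₂(inl w) agree as functions of the W-coordinates; (iii) for every assignment x : Π w ∈ W, σ(w), the local conditional factors agree: Σ over z : Π b ∈ B, τ(b) of Π_{i ∈ inr''B ∪ inl''C} f₁(i)(x⊕z)((x⊕z)(i)) = Σ over z' : Π b' ∈ B', τ'(b') of Π_{i ∈ inr''B' ∪ inl''C} f₂(i)(x⊕z')((x⊕z')(i)). Then for every x : Π w ∈ W, σ(w): Σ over z : Π b ∈ B, τ(b) of Π_{i ∈ V₁} f₁(i)(x⊕z)((x⊕z)(i)) = Σ over z' : Π b' ∈ B', τ'(b') of Π_{i ∈ V₂} f₂(i)(x⊕z')((x⊕z')(i)); that is, the two DAG models, which are local modifications of each other, yield the same joint distribution on the W-variables when the B-variables (resp. B'-variables) are hidden (marginalized out). -/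
universe u

/-- Glue an assignment on `W` and an assignment on `β` into an assignment on
the vertex set `W ⊕ β` with state spaces `Sum.elim σ τ`. -/
def glue {W β : Type*} (σ : W → Type u) (τ : β → Type u)
    (x : ∀ w, σ w) (z : ∀ b, τ b) : ∀ v : W ⊕ β, Sum.elim σ τ v
  | Sum.inl w => x w
  | Sum.inr b => z b

/-- Disjoint vertex subsets `(A, B, C)` form a local structure in a digraph
with parent map `pa`: every parent of a vertex of `B` lies in `A ∪ B`, every
child of a vertex of `B` lies in `B ∪ C`, and every parent of a vertex of `C`
lies in `A ∪ B ∪ C`. -/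
def LocalStructure {V : Type*} [DecidableEq V] (pa : V → Finset V)
    (A B C : Finset V) : Prop :=
  Disjoint A B ∧ Disjoint A C ∧ Disjoint B C ∧
  (∀ b ∈ B, pa b ⊆ A ∪ B) ∧
  (∀ b ∈ B, ∀ i, b ∈ pa i → i ∈ B ∪ C) ∧
  (∀ c ∈ C, pa c ⊆ A ∪ B ∪ C)

/-- two DAG models on `V₁ = W ⊕ B` and `V₂ = W ⊕ B'` that are
local modifications of each other (with local structures `(A, B, C)` and
`(A, B', C)`, agreeing outside of `B`, `B'`), and whose local conditional
factors `∑_{z} ∏_{i ∈ B ∪ C} f i` agree, yield the same joint distribution on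
the `W`-variables once the `B`- (resp. `B'`-) variables are marginalized
out. -/
theorem local_modification_same_distribution
    {W B B' : Type*} [Fintype W] [DecidableEq W]
    [Fintype B] [DecidableEq B] [Fintype B'] [DecidableEq B']
    (σ : W → Type u) [∀ w, Fintype (σ w)] [∀ w, Nonempty (σ w)]
    (τ : B → Type u) [∀ b, Fintype (τ b)] [∀ b, Nonempty (τ b)]
    (τ' : B' → Type u) [∀ b, Fintype (τ' b)] [∀ b, Nonempty (τ' b)]
    (A C : Finset W) (hACdisj : Disjoint A C)
    (pa₁ : W ⊕ B → Finset (W ⊕ B)) (pa₂ : W ⊕ B' → Finset (W ⊕ B'))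
    (f₁ : ∀ i : W ⊕ B, (∀ j : W ⊕ B, Sum.elim σ τ j) → Sum.elim σ τ i → ℝ)
    (f₂ : ∀ i : W ⊕ B', (∀ j : W ⊕ B', Sum.elim σ τ' j) → Sum.elim σ τ' i → ℝ)
    (hloc₁ : ∀ i, ∀ u v : ∀ j : W ⊕ B, Sum.elim σ τ j,
      (∀ j ∈ pa₁ i, u j = v j) → f₁ i u = f₁ i v)
    (hloc₂ : ∀ i, ∀ u v : ∀ j : W ⊕ B', Sum.elim σ τ' j,
      (∀ j ∈ pa₂ i, u j = v j) → f₂ i u = f₂ i v)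
    -- (i) local structures in both graphs
    (hLS₁ : LocalStructure pa₁ (A.image Sum.inl)
      ((Finset.univ : Finset B).image Sum.inr) (C.image Sum.inl))
    (hLS₂ : LocalStructure pa₂ (A.image Sum.inl)
      ((Finset.univ : Finset B').image Sum.inr) (C.image Sum.inl))
    -- (ii) outside of C, the two graphs and kernels agree on the W-vertices
    (hpaW₁ : ∀ w : W, w ∉ C → ∀ v ∈ pa₁ (Sum.inl w), ∃ u : W, v = Sum.inl u)
    (hpaW₂ : ∀ w : W, w ∉ C → ∀ v ∈ pa₂ (Sum.inl w), ∃ u : W, v = Sum.inl u)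
    (hpaAgree : ∀ w : W, w ∉ C → ∀ u : W,
      Sum.inl u ∈ pa₁ (Sum.inl w) ↔ Sum.inl u ∈ pa₂ (Sum.inl w))
    (hfAgree : ∀ w : W, w ∉ C →
      ∀ (x : ∀ v, σ v) (z : ∀ b, τ b) (z' : ∀ b, τ' b),
        f₁ (Sum.inl w) (glue σ τ x z) = f₂ (Sum.inl w) (glue σ τ' x z'))
    -- (iii) the local conditional factors agree
    (hcond : ∀ x : ∀ w, σ w,
      (∑ z : ∀ b, τ b,
          ∏ i ∈ (Finset.univ : Finset B).image Sum.inr ∪ C.image Sum.inl,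
            f₁ i (glue σ τ x z) (glue σ τ x z i)) =
        ∑ z' : ∀ b, τ' b,
          ∏ i ∈ (Finset.univ : Finset B').image Sum.inr ∪ C.image Sum.inl,
            f₂ i (glue σ τ' x z') (glue σ τ' x z' i))
    (x : ∀ w, σ w) :
    (∑ z : ∀ b, τ b, ∏ i, f₁ i (glue σ τ x z) (glue σ τ x z i)) =
      ∑ z' : ∀ b, τ' b, ∏ i, f₂ i (glue σ τ' x z') (glue σ τ' x z' i) := by
  classical
  obtain ⟨z₀⟩ : Nonempty (∀ b, τ b) := ⟨fun _ => Classical.arbitrary _⟩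
  obtain ⟨z'₀⟩ : Nonempty (∀ b, τ' b) := ⟨fun _ => Classical.arbitrary _⟩
  set S₁ : Finset (W ⊕ B) := (Finset.univ : Finset B).image Sum.inr ∪ C.image Sum.inl
    with hS₁
  set S₂ : Finset (W ⊕ B') := (Finset.univ : Finset B').image Sum.inr ∪ C.image Sum.inl
    with hS₂
  have hcompl₁ : S₁ᶜ = Cᶜ.image (Sum.inl : W → W ⊕ B) := by
    ext i; cases i <;> simp [hS₁]
  have hcompl₂ : S₂ᶜ = Cᶜ.image (Sum.inl : W → W ⊕ B') := by
    ext i; cases i <;> simp [hS₂]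
  have key₁ : ∀ z : ∀ b, τ b,
      (∏ i, f₁ i (glue σ τ x z) (glue σ τ x z i)) =
        (∏ w ∈ Cᶜ, f₂ (Sum.inl w) (glue σ τ' x z'₀) (x w)) *
          ∏ i ∈ S₁, f₁ i (glue σ τ x z) (glue σ τ x z i) := by
    intro z
    rw [← Finset.prod_mul_prod_compl S₁, mul_comm]
    congr 1
    rw [hcompl₁, Finset.prod_image (fun a _ b _ h => Sum.inl.inj h)]
    refine Finset.prod_congr rfl fun w hw => ?_
    have hwC : w ∉ C := by simpa using hw
    exact congrFun (hfAgree w hwC x z z'₀) (x w)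
  have key₂ : ∀ z' : ∀ b, τ' b,
      (∏ i, f₂ i (glue σ τ' x z') (glue σ τ' x z' i)) =
        (∏ w ∈ Cᶜ, f₂ (Sum.inl w) (glue σ τ' x z'₀) (x w)) *
          ∏ i ∈ S₂, f₂ i (glue σ τ' x z') (glue σ τ' x z' i) := by
    intro z'
    rw [← Finset.prod_mul_prod_compl S₂, mul_comm]
    congr 1
    rw [hcompl₂, Finset.prod_image (fun a _ b _ h => Sum.inl.inj h)]
    refine Finset.prod_congr rfl fun w hw => ?_
    have hwC : w ∉ C := by simpa using hw
    have h1 := congrFun (hfAgree w hwC x z₀ z') (x w)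
    have h2 := congrFun (hfAgree w hwC x z₀ z'₀) (x w)
    exact h1.symm.trans h2
  simp only [key₁, key₂, ← Finset.mul_sum]
  rw [hcond x]
end

section
/- Let (V, pa) be a DAG in topological order, with every state space equal to Fin k for some k ≥ 1. Suppose the kernels have the displayed-tree network form: for each i with pa(i) = ∅, f(i) x c = ρ_i(c) for some nonnegative ρ_i : Fin k → ℝ with Σ_c ρ_i(c) = 1; and for each i with pa(i) ≠ ∅, f(i) x c = Σ_{a ∈ pa(i)} π_i(a)·M_{a,i}(x(a), c), where π_i : pa(i) → ℝ is nonnegative with Σ_a π_i(a) = 1 and each M_{a,i} is a Markov matrix on Fin k. Let p(x) = Π_{i∈V} f(i) x (x(i)) be the joint distribution. Let A, B ⊆ V be disjoint, and let E be a finite set of ordered pairs (u, v) with u ∈ pa(v), such that in the undirected graph on V with adjacency relation i ~ j iff (i ∈ pa(j) or j ∈ pa(i)) and neither (i,j) nor (j,i) belongs to E, no vertex of A is connected by a path to a vertex of B. Then the flattening matrix F ∈ Matrix (A → Fin k) (B → Fin k) ℝ with entries F(x_A, x_B) = Σ over all y : Π i, Fin k agreeing with x_A on A and with x_B on B of p(y)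 has rank at most k^(card E). -/
open Finset Matrix

/-- connectivity to `A` in the graph with the edges of `E` removed -/
private def dtConn {V : Type*} (pa : V → Finset V) (E : Finset (V × V)) (A : Finset V)
    (v : V) : Prop :=
  ∃ a ∈ A, Relation.ReflTransGen
    (fun i j => (i ∈ pa j ∨ j ∈ pa i) ∧ (i, j) ∉ E ∧ (j, i) ∉ E) a v

private lemma factor_congr {V : Type*} [DecidableEq V] (pa : V → Finset V) {k : ℕ}
    (ρ : V → Fin k → ℝ) (π : V → V → ℝ) (M : V → V → Matrix (Fin k) (Fin k) ℝ)
    {y y' : V → Fin k} {i : V} (h0 : y i = y' i) (h : ∀ a ∈ pa i, y a = y' a) :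
    (if pa i = ∅ then ρ i (y i) else ∑ a ∈ pa i, π i a * M a i (y a) (y i))
      = (if pa i = ∅ then ρ i (y' i) else ∑ a ∈ pa i, π i a * M a i (y' a) (y' i)) := by
  rw [h0]
  exact if_congr Iff.rfl rfl (Finset.sum_congr rfl fun a ha => by rw [h a ha])

/-- extension of a state on a cut edge, with default value -/
private def zext {V : Type*} [DecidableEq V] (E : Finset (V × V)) {k : ℕ} (hk : 1 ≤ k)
    (z : {e // e ∈ E} → Fin k) (a i : V) : Fin k :=
  if h : (a, i) ∈ E then z ⟨(a, i), h⟩ else ⟨0, hk⟩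

/-- extension of a state on one side of the cut, using cut-edge states across -/
private def uextd {V : Type*} [DecidableEq V] (E : Finset (V × V)) {k : ℕ} (hk : 1 ≤ k)
    (C : V → Prop) [DecidablePred C]
    (u : {v // C v} → Fin k) (z : {e // e ∈ E} → Fin k) (i v : V) : Fin k :=
  if h : C v then u ⟨v, h⟩ else zext E hk z v i

open Classical in
/-- one half of the factorization of the flattening -/
private noncomputable def dtHalf {V : Type*} [Fintype V] [DecidableEq V] (pa : V → Finset V)
    {k : ℕ} (hk : 1 ≤ k) (ρ : V → Fin k → ℝ) (π : V → V → ℝ)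
    (M : V → V → Matrix (Fin k) (Fin k) ℝ) (E : Finset (V × V))
    (C : V → Prop) [DecidablePred C]
    (A : Finset V) (hAC : ∀ a ∈ A, C a) :
    Matrix ({a // a ∈ A} → Fin k) ({e // e ∈ E} → Fin k) ℝ := fun xA z =>
  ∑ u : {v // C v} → Fin k,
    if (∀ a : {a // a ∈ A}, u ⟨a.1, hAC a.1 a.2⟩ = xA a) ∧
       (∀ e : {e // e ∈ E}, ∀ h : C e.1.1, u ⟨e.1.1, h⟩ = z e) then
      ∏ i : {v // C v},
        (if pa i.1 = ∅ then ρ i.1 (uextd E hk C u z i.1 i.1)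
          else ∑ a ∈ pa i.1, π i.1 a * M a i.1 (uextd E hk C u z i.1 a) (uextd E hk C u z i.1 i.1))
    else 0

/-- for the displayed-tree network model on a DAG in topological
order with all state spaces `Fin k`, if removing the edge set `E` disconnects
the leaf sets `A` and `B` in the underlying undirected graph, then the
flattening matrix of the joint distribution with respect to `(A, B)` has rank
at most `k ^ card E`. -/
theorem displayedTree_flattening_rank_le
    {V : Type*} [Fintype V] [LinearOrder V]
    (pa : V → Finset V) (hpa : ∀ i, ∀ j ∈ pa i, j < i)
    (k : ℕ) (hk : 1 ≤ k)
    (ρ : V → Fin k → ℝ) (π : V → V → ℝ)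
    (M : V → V → Matrix (Fin k) (Fin k) ℝ)
    (hρ : ∀ i, pa i = ∅ → (∀ c, 0 ≤ ρ i c) ∧ ∑ c, ρ i c = 1)
    (hπ : ∀ i, pa i ≠ ∅ → (∀ a ∈ pa i, 0 ≤ π i a) ∧ ∑ a ∈ pa i, π i a = 1)
    (hM : ∀ i, pa i ≠ ∅ → ∀ a ∈ pa i,
      (∀ s t, 0 ≤ M a i s t) ∧ ∀ s, ∑ t, M a i s t = 1)
    (A B : Finset V) (hAB : Disjoint A B)
    (E : Finset (V × V)) (hE : ∀ e ∈ E, e.1 ∈ pa e.2)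
    (hsep : ∀ a ∈ A, ∀ b ∈ B, ¬ Relation.ReflTransGen
      (fun i j => (i ∈ pa j ∨ j ∈ pa i) ∧ (i, j) ∉ E ∧ (j, i) ∉ E) a b) :
    (Matrix.of fun (xA : {a // a ∈ A} → Fin k) (xB : {b // b ∈ B} → Fin k) =>
        ∑ y ∈ Finset.univ.filter (fun y : V → Fin k =>
            (∀ a : {a // a ∈ A}, y a = xA a) ∧
            (∀ b : {b // b ∈ B}, y b = xB b)),
          ∏ i, (if pa i = ∅ then ρ i (y i)
            else ∑ a ∈ pa i, π i a * M a i (y a) (y i))).rank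
      ≤ k ^ E.card := by
  classical
  have hAC : ∀ a ∈ A, dtConn pa E A a := fun a ha => ⟨a, ha, Relation.ReflTransGen.refl⟩
  have hBC : ∀ b ∈ B, ¬ dtConn pa E A b := by
    rintro b hb ⟨a, ha, hp⟩
    exact hsep a ha b hb hp
  have hBC' : ∀ b ∈ B, (fun v => ¬ dtConn pa E A v) b := hBC
  have hnE : ∀ a i, a ∈ pa i → (i, a) ∉ E := fun a i hai hia =>
    absurd (hpa i a hai) (lt_asymm (hpa a i (hE (i, a) hia)))
  have hCup : ∀ i a, dtConn pa E A i → a ∈ pa i → ¬ dtConn pa E A a → (a, i) ∈ E := by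
    intro i a hi hai hna
    by_contra hne
    obtain ⟨a0, ha0, hp⟩ := hi
    exact hna ⟨a0, ha0, hp.tail ⟨Or.inr hai, hnE a i hai, hne⟩⟩
  have hCdown : ∀ i a, ¬ dtConn pa E A i → a ∈ pa i → dtConn pa E A a → (a, i) ∈ E := by
    intro i a hi hai hca
    by_contra hne
    obtain ⟨a0, ha0, hp⟩ := hca
    exact hi ⟨a0, ha0, hp.tail ⟨Or.inl hai, hne, hnE a i hai⟩⟩
  have key : (Matrix.of fun (xA : {a // a ∈ A} → Fin k) (xB : {b // b ∈ B} → Fin k) =>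
        ∑ y ∈ Finset.univ.filter (fun y : V → Fin k =>
            (∀ a : {a // a ∈ A}, y a = xA a) ∧
            (∀ b : {b // b ∈ B}, y b = xB b)),
          ∏ i, (if pa i = ∅ then ρ i (y i)
            else ∑ a ∈ pa i, π i a * M a i (y a) (y i)))
      = dtHalf pa hk ρ π M E (dtConn pa E A) A hAC *
        (dtHalf pa hk ρ π M E (fun v => ¬ dtConn pa E A v) B hBC)ᵀ := by
    ext xA xB
    simp only [Matrix.mul_apply, Matrix.of_apply, Matrix.transpose_apply, dtHalf]
    rw [Finset.sum_filter]
    have expand : ∀ y : V → Fin k,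
        (if ((∀ a : {a // a ∈ A}, y a = xA a) ∧ (∀ b : {b // b ∈ B}, y b = xB b))
          then (∏ i, if pa i = ∅ then ρ i (y i)
              else ∑ a ∈ pa i, π i a * M a i (y a) (y i)) else 0)
        = ∑ z : {e // e ∈ E} → Fin k,
            if ((fun e : {e // e ∈ E} => y e.1.1) = z ∧
                (∀ a : {a // a ∈ A}, y a = xA a) ∧ (∀ b : {b // b ∈ B}, y b = xB b))
            then (∏ i, if pa i = ∅ then ρ i (y i)
              else ∑ a ∈ pa i, π i a * M a i (y a) (y i)) else 0 := by
      intro y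
      symm
      rw [Finset.sum_eq_single (fun e : {e // e ∈ E} => y e.1.1)]
      · exact if_congr (and_iff_right rfl) rfl rfl
      · intro z _ hz
        exact if_neg fun h => hz h.1.symm
      · intro h; exact absurd (Finset.mem_univ _) h
    rw [Finset.sum_congr rfl fun y _ => expand y, Finset.sum_comm]
    refine Finset.sum_congr rfl fun z _ => ?_
    rw [Finset.sum_mul_sum]
    rw [← Equiv.sum_comp (Equiv.piEquivPiSubtypeProd (dtConn pa E A) fun _ : V => Fin k).symm
      (fun y : V → Fin k =>
        if ((fun e : {e // e ∈ E} => y e.1.1) = z ∧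
            (∀ a : {a // a ∈ A}, y a = xA a) ∧ (∀ b : {b // b ∈ B}, y b = xB b))
        then (∏ i, if pa i = ∅ then ρ i (y i)
          else ∑ a ∈ pa i, π i a * M a i (y a) (y i)) else 0)]
    rw [Fintype.sum_prod_type]
    refine Finset.sum_congr rfl fun u _ => Finset.sum_congr rfl fun w _ => ?_
    set g : V → Fin k :=
      (Equiv.piEquivPiSubtypeProd (dtConn pa E A) fun _ : V => Fin k).symm (u, w) with hg
    have hgC : ∀ (v : V) (h : dtConn pa E A v), g v = u ⟨v, h⟩ := fun v h => by
      rw [hg, Equiv.piEquivPiSubtypeProd_symm_apply]; exact dif_pos h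
    have hgN : ∀ (v : V) (h : ¬ dtConn pa E A v), g v = w ⟨v, h⟩ := fun v h => by
      rw [hg, Equiv.piEquivPiSubtypeProd_symm_apply]; exact dif_neg h
    have hiff : ((fun e : {e // e ∈ E} => g e.1.1) = z ∧
            (∀ a : {a // a ∈ A}, g a = xA a) ∧ (∀ b : {b // b ∈ B}, g b = xB b))
        ↔ (((∀ a : {a // a ∈ A}, u ⟨a.1, hAC a.1 a.2⟩ = xA a) ∧
            (∀ e : {e // e ∈ E}, ∀ h : dtConn pa E A e.1.1, u ⟨e.1.1, h⟩ = z e)) ∧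
           ((∀ b : {b // b ∈ B}, w ⟨b.1, hBC b.1 b.2⟩ = xB b) ∧
            (∀ e : {e // e ∈ E}, ∀ h : ¬ dtConn pa E A e.1.1, w ⟨e.1.1, h⟩ = z e))) := by
      constructor
      · rintro ⟨h1, h2, h3⟩
        have h1' : ∀ e : {e // e ∈ E}, g e.1.1 = z e := fun e => congrFun h1 e
        exact ⟨⟨fun a => by rw [← hgC a.1 (hAC a.1 a.2)]; exact h2 a,
                fun e h => by rw [← hgC _ h]; exact h1' e⟩,
               ⟨fun b => by rw [← hgN b.1 (hBC b.1 b.2)]; exact h3 b,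
                fun e h => by rw [← hgN _ h]; exact h1' e⟩⟩
      · rintro ⟨⟨hA1, hL1⟩, hB1, hR1⟩
        refine ⟨funext fun e => ?_, fun a => ?_, fun b => ?_⟩
        · by_cases h : dtConn pa E A e.1.1
          · rw [hgC _ h]; exact hL1 e h
          · rw [hgN _ h]; exact hR1 e h
        · rw [hgC a.1 (hAC a.1 a.2)]; exact hA1 a
        · rw [hgN b.1 (hBC b.1 b.2)]; exact hB1 b
    by_cases hc : ((fun e : {e // e ∈ E} => g e.1.1) = z ∧
        (∀ a : {a // a ∈ A}, g a = xA a) ∧ (∀ b : {b // b ∈ B}, g b = xB b))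
    · rw [if_pos hc, if_pos (hiff.mp hc).1, if_pos (hiff.mp hc).2]
      have h1' : ∀ e : {e // e ∈ E}, g e.1.1 = z e := fun e => congrFun hc.1 e
      rw [← Fintype.prod_subtype_mul_prod_subtype (dtConn pa E A)
        (fun i : V => if pa i = ∅ then ρ i (g i)
          else ∑ a ∈ pa i, π i a * M a i (g a) (g i))]
      congr 1
      · refine Finset.prod_congr rfl fun i _ => factor_congr pa ρ π M ?_ ?_
        · rw [hgC i.1 i.2]
          simp only [uextd]
          rw [dif_pos i.2]
        · intro a ha
          by_cases hCa : dtConn pa E A a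
          · rw [hgC a hCa]
            simp only [uextd]
            rw [dif_pos hCa]
          · have hE1 : (a, i.1) ∈ E := hCup i.1 a i.2 ha hCa
            have hz := h1' ⟨(a, i.1), hE1⟩
            simp only [uextd, zext]
            rw [dif_neg hCa, dif_pos hE1]
            exact hz
      · refine Finset.prod_congr rfl fun i _ => factor_congr pa ρ π M ?_ ?_
        · rw [hgN i.1 i.2]
          simp only [uextd]
          rw [dif_pos i.2]
        · intro a ha
          by_cases hCa : dtConn pa E A a
          · have hE1 : (a, i.1) ∈ E := hCdown i.1 a i.2 ha hCa
            have hz := h1' ⟨(a, i.1), hE1⟩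
            simp only [uextd, zext]
            rw [dif_neg (not_not.mpr hCa), dif_pos hE1]
            exact hz
          · rw [hgN a hCa]
            simp only [uextd]
            rw [dif_pos hCa]
    · rw [if_neg hc]
      rcases not_and_or.mp ((not_iff_not.mpr hiff).mp hc) with h | h
      · rw [if_neg h, zero_mul]
      · rw [if_neg h, mul_zero]
  rw [key]
  refine le_trans (Matrix.rank_mul_le_left _ _) (le_trans (Matrix.rank_le_card_width _) ?_)
  rw [Fintype.card_fun, Fintype.card_coe, Fintype.card_fin]
end
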